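/- The free-monad construction sends cartesian morphisms of polynomial functors to cartesian natural transformations: let P, Q be PFunctors and let a cartesian morphism from Q to P be given by a function u : Q.A → P.A together with bijections σ_a : Q.B a ≃ P.B (u a) for each a : Q.A. Define κ_A : FM Q A → FM P A by κ (leaf x) := leaf x and κ (node a f) := node (u a) (fun e => κ (f (σ_a.symm e))), and write FMmap v for the functorial action of FM on a function v : A → A' (relabelling leaves). Then for every v : A → A', the map FM Q A → {(T', S) : FM Q A' × FM P A // κ_{A'} T' = FMmap v S}, T ↦ (FMmap v T, κ_A T), is a bijection (the naturality squares of κ are pullbacks). -/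

import Mathlib

universe u

/-- The type of `P`-trees with leaves decorated in `A`: the free `P`-structure on `A`. -/
inductive FM (P : PFunctor.{u}) (A : Type u) : Type u
  | leaf : A → FM P A
  | node : (a : P.A) → (P.B a → FM P A) → FM P A

/-- Grafting of `P`-trees: substitute the tree `g a` for each leaf decorated by `a`. -/
def graft {P : PFunctor.{u}} {A A' : Type u} (g : A → FM P A') : FM P A → FM P A'
  | .leaf a => g a
  | .node a f => .node a fun e => graft g (f e)

/-- The functorial action of the free monad: relabelling of leaves. -/
def FMmap {P : PFunctor.{u}} {A A' : Type u} (v : A → A') : FM P A → FM P A' :=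
  graft fun a => FM.leaf (v a)

/-- The map induced on free monads by a cartesian morphism `(u, σ)` from `Q` to `P`. -/
def kappa {P Q : PFunctor.{u}} (u : Q.A → P.A) (σ : ∀ a : Q.A, Q.B a ≃ P.B (u a))
    {A : Type u} : FM Q A → FM P A
  | .leaf x => .leaf x
  | .node a f => .node (u a) fun e => kappa u σ (f ((σ a).symm e))

/-- Naturality of `kappa`. -/
theorem kappa_naturality {P Q : PFunctor.{u}} (u : Q.A → P.A)
    (σ : ∀ a : Q.A, Q.B a ≃ P.B (u a)) {A A' : Type u} (v : A → A') :
    ∀ T : FM Q A, kappa u σ (FMmap v T) = FMmap v (kappa u σ T)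
  | .leaf _ => rfl
  | .node a f =>
      congrArg (FM.node (u a)) (funext fun e => kappa_naturality u σ v (f ((σ a).symm e)))

theorem kappa_inj_aux {P Q : PFunctor.{u}} (u : Q.A → P.A)
    (σ : ∀ a : Q.A, Q.B a ≃ P.B (u a)) {A A' : Type u} (v : A → A') :
    ∀ T₁ T₂ : FM Q A, FMmap v T₁ = FMmap v T₂ → kappa u σ T₁ = kappa u σ T₂ → T₁ = T₂
  | .leaf x, .leaf y, _, hk => by
      simp only [kappa, FM.leaf.injEq] at hk; rw [hk]
  | .leaf _, .node _ _, hm, _ => by simp [FMmap, graft] at hm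
  | .node _ _, .leaf _, hm, _ => by simp [FMmap, graft] at hm
  | .node a f, .node a' f', hm, hk => by
      simp only [FMmap, graft, FM.node.injEq] at hm
      obtain ⟨rfl, hf⟩ := hm
      rw [heq_iff_eq] at hf
      simp only [kappa, FM.node.injEq, heq_iff_eq, true_and] at hk
      have : f = f' := funext fun e => by
        refine kappa_inj_aux u σ v (f e) (f' e) (congrFun hf e) ?_
        have := congrFun hk (σ a e)
        simpa using this
      rw [this]

theorem kappa_surj_aux {P Q : PFunctor.{u}} (u : Q.A → P.A)
    (σ : ∀ a : Q.A, Q.B a ≃ P.B (u a)) {A A' : Type u} (v : A → A') :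
    ∀ S : FM P A, ∀ T' : FM Q A', kappa u σ T' = FMmap v S →
      ∃ T, FMmap v T = T' ∧ kappa u σ T = S := by
  intro S
  induction S with
  | leaf x =>
    intro T' h
    cases T' with
    | leaf y =>
      simp only [kappa, FMmap, graft, FM.leaf.injEq] at h
      exact ⟨.leaf x, by simp [FMmap, graft, h], rfl⟩
    | node a f => simp [kappa, FMmap, graft] at h
  | node b g ih =>
    intro T' h
    cases T' with
    | leaf y => simp [kappa, FMmap, graft] at h
    | node a f =>
      simp only [kappa, FMmap, graft, FM.node.injEq] at h
      obtain ⟨rfl, hf⟩ := h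
      rw [heq_iff_eq] at hf
      choose t ht1 ht2 using fun e => ih e (f ((σ a).symm e)) (congrFun hf e)
      refine ⟨.node a (fun b' => t ((σ a) b')), ?_, ?_⟩
      · simp only [FMmap, graft, FM.node.injEq, heq_iff_eq, true_and]
        funext b'
        have := ht1 ((σ a) b')
        simpa [FMmap] using this
      · simp only [kappa, FM.node.injEq, heq_iff_eq, true_and]
        funext e
        have := ht2 e
        simpa using this

/-- The free-monad construction sends cartesian morphisms of polynomial functors to
cartesian natural transformations: every naturality square of `kappa` is a pullback of
types. -/
theorem kappa_cartesian (P Q : PFunctor.{u}) (u : Q.A → P.A)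
    (σ : ∀ a : Q.A, Q.B a ≃ P.B (u a)) (A A' : Type u) (v : A → A') :
    Function.Bijective (fun T : FM Q A =>
      (⟨(FMmap v T, kappa u σ T), kappa_naturality u σ v T⟩ :
        {TS : FM Q A' × FM P A // kappa u σ TS.1 = FMmap v TS.2})) := by
  constructor
  · intro T₁ T₂ h
    simp only [Subtype.mk.injEq, Prod.mk.injEq] at h
    exact kappa_inj_aux u σ v T₁ T₂ h.1 h.2
  · rintro ⟨⟨T', S⟩, hTS⟩
    obtain ⟨T, h1, h2⟩ := kappa_surj_aux u σ v S T' hTS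
    exact ⟨T, by simp [h1, h2]⟩
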